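/- arXiv:2603.12782 — 3 statements merged into one kernel-verified Lean document; each statement's English description precedes it below -/
import Mathlib

section
/- Let 𝒜 : ℝ^{n×n} → ℝ^{n×n} be a linear map and let X : [0,∞) → ℝ^{n×n} be differentiable and satisfy the differential equation Ẋ(t) = 𝒜(X(t)) − ⟨𝒜(X(t)), X(t)⟩ X(t) for all t ≥ 0, with ‖X(0)‖_F = 1. Then ‖X(t)‖_F = 1 for all t ≥ 0. -/
open Matrix

-- Equip square real matrices with the Frobenius norm.
attribute [local instance] Matrix.frobeniusNormedAddCommGroup Matrix.frobeniusNormedSpace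

/-- Frobenius inner product `⟨A,B⟩ = trace(AᵀB) = ∑_{i,j} A_{ij} B_{ij}`. -/
def frobInner {n : ℕ} (A B : Matrix (Fin n) (Fin n) ℝ) : ℝ :=
  ∑ i, ∑ j, A i j * B i j

/-!
Flattening a matrix to a vector of `EuclideanSpace ℝ (Fin n × Fin n)` is an isometry for the
Frobenius norm carrying `frobInner` to the inner product, so the flow becomes
`Ẏ = V - ⟪V, Y⟫ Y` in a real inner product space. Along it, `h = ‖Y‖² - 1` satisfies the linear
equation `ḣ = -2 ⟪V, Y⟫ h`, whose coefficient is continuous, hence bounded on compact intervals;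
Grönwall's inequality then forces `h ≡ 0` from `h 0 = 0`.
-/

open Set

open scoped RealInnerProductSpace

theorem eqOn_zero_of_hasDerivWithinAt_smul_self {E : Type*} [NormedAddCommGroup E]
    [NormedSpace ℝ E] {f : ℝ → E} {c : ℝ → ℝ} {a : ℝ} (hc : ContinuousOn c (Ici a))
    (hf : ∀ t ∈ Ici a, HasDerivWithinAt f (c t • f t) (Ici a) t) (ha : f a = 0) :
    EqOn f 0 (Ici a) := by
  intro t ht
  have hfc : ContinuousOn f (Ici a) := fun x hx => (hf x hx).continuousWithinAt
  obtain ⟨K, hK⟩ := (isCompact_Icc (b := t)).exists_bound_of_continuousOn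
    (hc.mono Icc_subset_Ici_self)
  refine eq_zero_of_abs_deriv_le_mul_abs_self_of_eq_zero_right (K := K)
    (hfc.mono Icc_subset_Ici_self) (fun x hx => (hf x hx.1).mono (Ici_subset_Ici.2 hx.1)) ha
    (fun x hx => ?_) t ⟨ht, le_rfl⟩
  rw [norm_smul]
  exact mul_le_mul_of_nonneg_right (hK x (Ico_subset_Icc_self hx)) (norm_nonneg _)

theorem norm_eq_one_of_hasDerivWithinAt_sub_inner_smul {F : Type*} [NormedAddCommGroup F]
    [InnerProductSpace ℝ F] {Y V : ℝ → F} {a : ℝ} (hV : ContinuousOn V (Ici a))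
    (hY : ∀ t ∈ Ici a, HasDerivWithinAt Y (V t - ⟪V t, Y t⟫ • Y t) (Ici a) t)
    (ha : ‖Y a‖ = 1) : ∀ t ∈ Ici a, ‖Y t‖ = 1 := by
  have hYc : ContinuousOn Y (Ici a) := fun t ht => (hY t ht).continuousWithinAt
  have hsq : ∀ t ∈ Ici a, HasDerivWithinAt (fun s => ‖Y s‖ ^ 2 - 1)
      ((-2 * ⟪V t, Y t⟫) • (‖Y t‖ ^ 2 - 1)) (Ici a) t := by
    intro t ht
    refine (((hY t ht).norm_sq).sub_const 1).congr_deriv ?_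
    rw [inner_sub_right, real_inner_smul_right, real_inner_comm, real_inner_self_eq_norm_sq,
      smul_eq_mul]
    ring
  have hc : ContinuousOn (fun t => -2 * ⟪V t, Y t⟫) (Ici a) :=
    continuousOn_const.mul (hV.inner hYc)
  intro t ht
  have hsq_eq : ‖Y t‖ ^ 2 - 1 = 0 :=
    eqOn_zero_of_hasDerivWithinAt_smul_self hc hsq (by simp [ha]) ht
  exact (pow_eq_one_iff_of_nonneg (norm_nonneg _) two_ne_zero).1 (sub_eq_zero.1 hsq_eq)

noncomputable def frobeniusToEuclidean (n : ℕ) :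
    Matrix (Fin n) (Fin n) ℝ →ₗᵢ[ℝ] EuclideanSpace ℝ (Fin n × Fin n) where
  toFun A := WithLp.toLp 2 fun p => A p.1 p.2
  map_add' _ _ := rfl
  map_smul' _ _ := rfl
  norm_map' A := by
    rw [EuclideanSpace.norm_eq, frobenius_norm_def, Real.sqrt_eq_rpow, Fintype.sum_prod_type]
    simp only [Real.norm_eq_abs, sq_abs, Real.rpow_two]
    rfl

theorem frobInner_eq_inner {n : ℕ} (A B : Matrix (Fin n) (Fin n) ℝ) :
    frobInner A B = ⟪frobeniusToEuclidean n A, frobeniusToEuclidean n B⟫ := by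
  rw [PiLp.inner_apply, Fintype.sum_prod_type]
  simp only [frobInner, RCLike.inner_apply, conj_trivial, mul_comm]
  rfl

/-- **norm preservation.** Solutions of
`Ẋ = 𝒜(X) − ⟨𝒜(X), X⟩ X` with `‖X(0)‖_F = 1` stay on the Frobenius unit sphere. -/
theorem norm_preservation {n : ℕ}
    (𝒜 : Matrix (Fin n) (Fin n) ℝ →ₗ[ℝ] Matrix (Fin n) (Fin n) ℝ)
    (X : ℝ → Matrix (Fin n) (Fin n) ℝ)
    (hX : ∀ t ∈ Set.Ici (0 : ℝ),
      HasDerivWithinAt X (𝒜 (X t) - frobInner (𝒜 (X t)) (X t) • X t) (Set.Ici 0) t)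
    (h0 : ‖X 0‖ = 1) :
    ∀ t ∈ Set.Ici (0 : ℝ), ‖X t‖ = 1 := by
  let e := frobeniusToEuclidean n
  have hXc : ContinuousOn X (Ici 0) := fun t ht => (hX t ht).continuousWithinAt
  have hV : ContinuousOn (fun t => e (𝒜 (X t))) (Ici 0) :=
    (e.continuous.comp (LinearMap.continuous_of_finiteDimensional 𝒜)).comp_continuousOn hXc
  have hY : ∀ t ∈ Ici (0 : ℝ), HasDerivWithinAt (fun t => e (X t))
      (e (𝒜 (X t)) - ⟪e (𝒜 (X t)), e (X t)⟫ • e (X t)) (Ici 0) t := fun t ht => by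
    have := e.toContinuousLinearMap.hasFDerivAt.comp_hasDerivWithinAt t (hX t ht)
    rwa [LinearIsometry.coe_toContinuousLinearMap, map_sub, map_smul, frobInner_eq_inner] at this
  intro t ht
  rw [← e.norm_map]
  exact norm_eq_one_of_hasDerivWithinAt_sub_inner_smul hV hY (by rwa [e.norm_map]) t ht
end

section
/- Let 𝒜 : ℝ^{n×n} → ℝ^{n×n} be a linear map that is self-adjoint with respect to the Frobenius inner product, i.e., ⟨𝒜(X), Y⟩ = ⟨X, 𝒜(Y)⟩ for all X, Y. Let X : [0,∞) → ℝ^{n×n} be differentiable and satisfy Ẋ(t) = 𝒜(X(t)) − ρ(X(t)) X(t) with ‖X(0)‖_F = 1, where ρ(X) = ⟨𝒜(X), X⟩. Then for every t ≥ 0, the function t ↦ ρ(X(t)) is differentiable with d/dt ρ(X(t)) = 2 ‖𝒜(X(t)) − ρ(X(t)) X(t)‖_F² ≥ 0; in particular, ρ(X(t)) is nondecreasing along the flow. -/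
/-!
Write `ρ = ⟨𝒜X, X⟩` and `D = 𝒜X − ρX`. Since `⟨X, D⟩ = ρ (1 − ‖X‖²)`, the
defect `u = ‖X‖² − 1` solves the linear equation `u' = −2ρ u` with `u(0) = 0`,
so Grönwall's inequality forces `‖X‖ ≡ 1` and hence `⟨X, D⟩ ≡ 0`.
Self-adjointness of `𝒜` then gives
`ρ' = ⟨𝒜D, X⟩ + ⟨𝒜X, D⟩ = 2⟨𝒜X, D⟩ = 2⟨D, D⟩ + 2ρ⟨X, D⟩ = 2‖D‖²`.
-/

open Matrix

attribute [local instance] Matrix.frobeniusNormedAddCommGroup Matrix.frobeniusNormedSpace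

open Set

theorem eq_zero_of_hasDerivWithinAt_smul_self {F : Type*} [NormedAddCommGroup F]
    [NormedSpace ℝ F] {f : ℝ → F} {g : ℝ → ℝ} {a : ℝ} (hg : ContinuousOn g (Ici a))
    (hf : ∀ t ∈ Ici a, HasDerivWithinAt f (g t • f t) (Ici a) t) (ha : f a = 0) :
    ∀ t ∈ Ici a, f t = 0 := by
  intro b hb
  obtain ⟨C, hC⟩ :=
    isCompact_Icc.exists_bound_of_continuousOn (hg.mono (Icc_subset_Ici_self : Icc a b ⊆ Ici a))
  refine eq_zero_of_abs_deriv_le_mul_abs_self_of_eq_zero_right (K := C)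
    (fun t ht => (hf t ht.1).continuousWithinAt.mono Icc_subset_Ici_self)
    (fun t ht => (hf t ht.1).mono (Ici_subset_Ici.mpr ht.1)) ha (fun t ht => ?_)
    b ⟨hb, le_rfl⟩
  rw [norm_smul]
  exact mul_le_mul_of_nonneg_right (hC t (Ico_subset_Icc_self ht)) (norm_nonneg _)

theorem monotoneOn_Ici_of_hasDerivWithinAt_nonneg {f f' : ℝ → ℝ} {a : ℝ}
    (hf : ∀ t ∈ Ici a, HasDerivWithinAt f (f' t) (Ici a) t) (hf' : ∀ t ∈ Ici a, 0 ≤ f' t) :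
    MonotoneOn f (Ici a) := by
  refine monotoneOn_of_hasDerivWithinAt_nonneg (convex_Ici a)
    (fun t ht => (hf t ht).continuousWithinAt) (fun t ht => ?_) (fun t ht => hf' t ?_)
  all_goals rw [interior_Ici] at *
  · exact (hf t (mem_Ici_of_Ioi ht)).mono Ioi_subset_Ici_self
  · exact mem_Ici_of_Ioi ht

section RayleighFlow

variable {E : Type*} [NormedAddCommGroup E] [NormedSpace ℝ E]

def IsRayleighFlow (B : E →L[ℝ] E →L[ℝ] ℝ) (T : E →L[ℝ] E) (X : ℝ → E) (a : ℝ) : Prop :=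
  ∀ t ∈ Ici a, HasDerivWithinAt X (T (X t) - B (T (X t)) (X t) • X t) (Ici a) t

variable {B : E →L[ℝ] E →L[ℝ] ℝ} {T : E →L[ℝ] E} {X : ℝ → E} {a : ℝ}

theorem apply_sub_rayleigh_smul (hB : ∀ x y, B x y = B y x) (x : E) :
    B x (T x - B (T x) x • x) = B (T x) x * (1 - B x x) := by
  simp only [map_sub, map_smul, smul_eq_mul, hB x (T x)]
  ring

theorem IsRayleighFlow.apply_self_eq_one (hB : ∀ x y, B x y = B y x)
    (hX : IsRayleighFlow B T X a) (ha : B (X a) (X a) = 1) :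
    ∀ t ∈ Ici a, B (X t) (X t) = 1 := by
  have hXc : ContinuousOn X (Ici a) := fun t ht => (hX t ht).continuousWithinAt
  have hρ : ContinuousOn (fun t => -2 * B (T (X t)) (X t)) (Ici a) := by fun_prop
  have hdefect : ∀ t ∈ Ici a, HasDerivWithinAt (fun s => B (X s) (X s) - 1)
      ((-2 * B (T (X t)) (X t)) • (B (X t) (X t) - 1)) (Ici a) t := by
    intro t ht
    refine ((B.hasDerivWithinAt_of_bilinear (hX t ht) (hX t ht)).sub_const 1).congr_deriv ?_
    rw [hB (T (X t) - B (T (X t)) (X t) • X t) (X t), apply_sub_rayleigh_smul hB,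
      smul_eq_mul]
    ring
  intro t ht
  exact sub_eq_zero.mp (eq_zero_of_hasDerivWithinAt_smul_self hρ hdefect (by simp [ha]) t ht)

theorem IsRayleighFlow.hasDerivWithinAt_rayleigh (hB : ∀ x y, B x y = B y x)
    (hT : ∀ x y, B (T x) y = B x (T y)) (hX : IsRayleighFlow B T X a)
    (ha : B (X a) (X a) = 1) (t : ℝ) (ht : t ∈ Ici a) :
    HasDerivWithinAt (fun s => B (T (X s)) (X s))
      (2 * B (T (X t) - B (T (X t)) (X t) • X t) (T (X t) - B (T (X t)) (X t) • X t))
      (Ici a) t := by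
  set D := T (X t) - B (T (X t)) (X t) • X t
  have hXD : B (X t) D = 0 := by
    rw [apply_sub_rayleigh_smul hB, hX.apply_self_eq_one hB ha t ht, sub_self, mul_zero]
  have hDD : B D D = B (T (X t)) D := calc
    B D D = B (T (X t) - B (T (X t)) (X t) • X t) D := rfl
    _ = B (T (X t)) D - B (T (X t)) (X t) * B (X t) D := by
      rw [B.map_sub₂, B.map_smul₂, smul_eq_mul]
    _ = B (T (X t)) D := by rw [hXD, mul_zero, sub_zero]
  refine (B.hasDerivWithinAt_of_bilinear (T.hasFDerivAt.comp_hasDerivWithinAt t (hX t ht))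
    (hX t ht)).congr_deriv ?_
  rw [Function.comp_apply, hT D (X t), hB D (T (X t)), hDD]
  ring

end RayleighFlow

theorem frobInner_comm {n : ℕ} (A B : Matrix (Fin n) (Fin n) ℝ) :
    frobInner A B = frobInner B A := by
  simp only [frobInner, mul_comm]

theorem frobInner_self_eq_norm_sq {n : ℕ} (A : Matrix (Fin n) (Fin n) ℝ) :
    frobInner A A = ‖A‖ ^ 2 := by
  rw [frobenius_norm_def, ← Real.rpow_natCast, ← Real.rpow_mul (by positivity)]
  norm_num [frobInner, sq]

theorem isBilinearMap_frobInner (n : ℕ) : IsBilinearMap ℝ (frobInner (n := n)) where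
  add_left A B C := by simp only [frobInner, Matrix.add_apply, add_mul, Finset.sum_add_distrib]
  smul_left c A B := by
    simp only [frobInner, Matrix.smul_apply, smul_eq_mul, Finset.mul_sum, mul_assoc]
  add_right A B C := by simp only [frobInner, Matrix.add_apply, mul_add, Finset.sum_add_distrib]
  smul_right c A B := by
    simp only [frobInner, Matrix.smul_apply, smul_eq_mul, Finset.mul_sum, mul_left_comm]

noncomputable def frobInnerL (n : ℕ) :
    Matrix (Fin n) (Fin n) ℝ →L[ℝ] Matrix (Fin n) (Fin n) ℝ →L[ℝ] ℝ :=
  (isBilinearMap_frobInner n).toContinuousBilinearMap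

theorem frobInnerL_apply {n : ℕ} (A B : Matrix (Fin n) (Fin n) ℝ) :
    frobInnerL n A B = frobInner A B :=
  rfl

/-- **gradient system for the Rayleigh quotient.** If `𝒜` is
self-adjoint for the Frobenius inner product and `Ẋ = 𝒜(X) − ρ(X) X` with
`‖X(0)‖_F = 1`, where `ρ(X) = ⟨𝒜(X), X⟩`, then
`d/dt ρ(X(t)) = 2‖𝒜(X(t)) − ρ(X(t))X(t)‖_F² ≥ 0`, so `ρ(X(t))` is
nondecreasing along the flow. -/
theorem rayleigh_quotient_nondecreasing {n : ℕ}
    (𝒜 : Matrix (Fin n) (Fin n) ℝ →ₗ[ℝ] Matrix (Fin n) (Fin n) ℝ)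
    (hsym : ∀ Y Z : Matrix (Fin n) (Fin n) ℝ, frobInner (𝒜 Y) Z = frobInner Y (𝒜 Z))
    (X : ℝ → Matrix (Fin n) (Fin n) ℝ)
    (hX : ∀ t ∈ Set.Ici (0 : ℝ),
      HasDerivWithinAt X (𝒜 (X t) - frobInner (𝒜 (X t)) (X t) • X t) (Set.Ici 0) t)
    (h0 : ‖X 0‖ = 1) :
    (∀ t ∈ Set.Ici (0 : ℝ),
      HasDerivWithinAt (fun s => frobInner (𝒜 (X s)) (X s))
        (2 * ‖𝒜 (X t) - frobInner (𝒜 (X t)) (X t) • X t‖ ^ 2) (Set.Ici 0) t ∧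
      0 ≤ 2 * ‖𝒜 (X t) - frobInner (𝒜 (X t)) (X t) • X t‖ ^ 2) ∧
    (∀ s t : ℝ, 0 ≤ s → s ≤ t →
      frobInner (𝒜 (X s)) (X s) ≤ frobInner (𝒜 (X t)) (X t)) := by
  have hflow : IsRayleighFlow (frobInnerL n) (LinearMap.toContinuousLinearMap 𝒜) X 0 := hX
  have hX0 : frobInnerL n (X 0) (X 0) = 1 := by
    rw [frobInnerL_apply, frobInner_self_eq_norm_sq, h0, one_pow]
  have hρ : ∀ t ∈ Ici (0 : ℝ), HasDerivWithinAt (fun s => frobInner (𝒜 (X s)) (X s))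
      (2 * ‖𝒜 (X t) - frobInner (𝒜 (X t)) (X t) • X t‖ ^ 2) (Ici 0) t := fun t ht => by
    rw [← frobInner_self_eq_norm_sq]
    exact hflow.hasDerivWithinAt_rayleigh frobInner_comm hsym hX0 t ht
  have hmono := monotoneOn_Ici_of_hasDerivWithinAt_nonneg hρ (fun _ _ => by positivity)
  exact ⟨fun t ht => ⟨hρ t ht, by positivity⟩,
    fun s t hs hst => hmono hs (hs.trans hst) hst⟩
end

section
/- Let 𝒜 : ℝ^{n×n} → ℝ^{n×n} be a linear map, let X : [0,∞) → ℝ^{n×n} be differentiable and satisfy Ẋ(t) = 𝒜(X(t)) − ⟨𝒜(X(t)), X(t)⟩ X(t) for all t ≥ 0, and suppose X(t) converges to some matrix V ∈ ℝ^{n×n} as t → ∞, with V ≠ 0. Then V is an eigenmatrix of 𝒜: 𝒜(V) = ⟨𝒜(V), V⟩/‖V‖_F² · V. -/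
/-! Along the flow the velocity `Ẋ(t)` tends to `F(V)`, where `F(Y) = 𝒜(Y) − ⟨𝒜(Y),Y⟩ Y` is
continuous. By the mean value inequality `X(t+1) − X(t)` is then close to `F(V)` for large `t`,
while it also tends to `V − V = 0`; hence `F(V) = 0`, i.e. `𝒜(V) = ⟨𝒜(V),V⟩ V`. Pairing an
identity `𝒜(V) = μ V` with `V` identifies `μ` as the Rayleigh quotient `⟨𝒜(V),V⟩ / ‖V‖_F²`. -/

open Matrix

-- Equip square real matrices with the Frobenius norm.
attribute [local instance] Matrix.frobeniusNormedAddCommGroup Matrix.frobeniusNormedSpace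

open Filter Set Topology

section Flow

variable {E : Type*} [NormedAddCommGroup E] [NormedSpace ℝ E]

theorem Convex.norm_image_sub_le_of_norm_hasDerivWithin_le' {f f' : ℝ → E} {s : Set ℝ}
    {L : E} {C x y : ℝ} (hf : ∀ t ∈ s, HasDerivWithinAt f (f' t) s t)
    (bound : ∀ t ∈ s, ‖f' t - L‖ ≤ C) (hs : Convex ℝ s) (hx : x ∈ s) (hy : y ∈ s) :
    ‖f y - f x - (y - x) • L‖ ≤ C * ‖y - x‖ := by
  have hg : ∀ t ∈ s, HasDerivWithinAt (fun t => f t - t • L) (f' t - L) s t := fun t ht => by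
    simpa using (hf t ht).fun_sub ((hasDerivWithinAt_id t s).smul_const L)
  calc ‖f y - f x - (y - x) • L‖ = ‖(f y - y • L) - (f x - x • L)‖ := by rw [sub_smul]; abel_nf
    _ ≤ C * ‖y - x‖ := hs.norm_image_sub_le_of_norm_hasDerivWithin_le hg bound hx hy

theorem eq_zero_of_tendsto_of_tendsto_hasDerivWithinAt {f f' : ℝ → E} {a : ℝ} {L V : E}
    (hf : ∀ t ∈ Ici a, HasDerivWithinAt f (f' t) (Ici a) t)
    (hfV : Tendsto f atTop (𝓝 V)) (hf' : Tendsto f' atTop (𝓝 L)) : L = 0 := by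
  have hstep_zero : Tendsto (fun t => f (t + 1) - f t) atTop (𝓝 0) := by
    simpa using (hfV.comp (tendsto_atTop_add_const_right _ 1 tendsto_id)).sub hfV
  have hstep_L : Tendsto (fun t => f (t + 1) - f t) atTop (𝓝 L) := by
    refine Metric.tendsto_nhds.2 fun ε hε => ?_
    obtain ⟨T, hT⟩ := eventually_atTop.1 (Metric.tendsto_nhds.1 hf' (ε / 2) (half_pos hε))
    filter_upwards [eventually_ge_atTop (max T a)] with t ht
    have hsub : Ici t ⊆ Ici a := Ici_subset_Ici.2 (le_of_max_le_right ht)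
    have hmvt := (convex_Ici t).norm_image_sub_le_of_norm_hasDerivWithin_le'
      (fun s hs => (hf s (hsub hs)).mono hsub)
      (fun s hs => (dist_eq_norm (f' s) L ▸ hT s (le_trans (le_of_max_le_left ht) hs)).le)
      self_mem_Ici (show t + 1 ∈ Ici t by simp)
    rw [dist_eq_norm]
    simp only [add_sub_cancel_left, one_smul, norm_one, mul_one] at hmvt
    linarith
  exact tendsto_nhds_unique hstep_L hstep_zero

end Flow

section FrobeniusInner

variable {n : ℕ}

theorem frobInner_self (A : Matrix (Fin n) (Fin n) ℝ) : frobInner A A = ‖A‖ ^ 2 := by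
  rw [frobenius_norm_def, ← Real.sqrt_eq_rpow, Real.sq_sqrt (by positivity)]
  simp [frobInner, sq]

theorem frobInner_smul_left (c : ℝ) (A B : Matrix (Fin n) (Fin n) ℝ) :
    frobInner (c • A) B = c * frobInner A B := by
  simp [frobInner, Finset.mul_sum, mul_assoc]

@[fun_prop]
theorem Continuous.frobInner {α : Type*} [TopologicalSpace α]
    {f g : α → Matrix (Fin n) (Fin n) ℝ} (hf : Continuous f) (hg : Continuous g) :
    Continuous fun x => _root_.frobInner (f x) (g x) := by
  unfold _root_.frobInner
  fun_prop

/-- For `V = 0` both sides vanish, since `‖0‖ ^ 2 = 0` and `x / 0 = 0`. -/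
theorem eq_frobInner_div_smul_of_eq_smul {A V : Matrix (Fin n) (Fin n) ℝ} {μ : ℝ}
    (h : A = μ • V) : A = (frobInner A V / ‖V‖ ^ 2) • V := by
  rcases eq_or_ne V 0 with rfl | hV
  · simp [h]
  · rw [h, frobInner_smul_left, frobInner_self, mul_div_assoc,
      div_self (pow_ne_zero 2 (norm_ne_zero_iff.2 hV)), mul_one]

end FrobeniusInner

theorem limit_is_eigenmatrix_general {n : ℕ}
    (𝒜 : Matrix (Fin n) (Fin n) ℝ →ₗ[ℝ] Matrix (Fin n) (Fin n) ℝ)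
    (X : ℝ → Matrix (Fin n) (Fin n) ℝ)
    (hX : ∀ t ∈ Set.Ici (0 : ℝ),
      HasDerivWithinAt X (𝒜 (X t) - frobInner (𝒜 (X t)) (X t) • X t) (Set.Ici 0) t)
    (V : Matrix (Fin n) (Fin n) ℝ)
    (hlim : Filter.Tendsto X Filter.atTop (nhds V)) :
    𝒜 V = (frobInner (𝒜 V) V / ‖V‖ ^ 2) • V := by
  have h𝒜 : Continuous 𝒜 := 𝒜.continuous_of_finiteDimensional
  have hvelocity : Tendsto (fun t => 𝒜 (X t) - frobInner (𝒜 (X t)) (X t) • X t) atTop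
      (𝓝 (𝒜 V - frobInner (𝒜 V) V • V)) :=
    ((by fun_prop : Continuous fun Y => 𝒜 Y - frobInner (𝒜 Y) Y • Y).tendsto V).comp hlim
  have hfixed := eq_zero_of_tendsto_of_tendsto_hasDerivWithinAt hX hlim hvelocity
  exact eq_frobInner_div_smul_of_eq_smul (sub_eq_zero.mp hfixed)

/-- **limits are eigenmatrices.** If a solution of
`Ẋ = 𝒜(X) − ⟨𝒜(X),X⟩ X` converges as `t → ∞` to some `V ≠ 0`, then `V` is an
eigenmatrix of `𝒜`: `𝒜(V) = (⟨𝒜(V),V⟩ / ‖V‖_F²) V`. -/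
theorem limit_is_eigenmatrix {n : ℕ}
    (𝒜 : Matrix (Fin n) (Fin n) ℝ →ₗ[ℝ] Matrix (Fin n) (Fin n) ℝ)
    (X : ℝ → Matrix (Fin n) (Fin n) ℝ)
    (hX : ∀ t ∈ Set.Ici (0 : ℝ),
      HasDerivWithinAt X (𝒜 (X t) - frobInner (𝒜 (X t)) (X t) • X t) (Set.Ici 0) t)
    (V : Matrix (Fin n) (Fin n) ℝ) (hV : V ≠ 0)
    (hlim : Filter.Tendsto X Filter.atTop (nhds V)) :
    𝒜 V = (frobInner (𝒜 V) V / ‖V‖ ^ 2) • V :=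
  limit_is_eigenmatrix_general 𝒜 X hX V hlim
end
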